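/- Fix α ∈ (0,1), μ₀ > 0 with μ₀·(π/2)^{α/(1−α)} ≤ 1/2, t > 0, and unit vectors w₁, w ∈ ℝ^d with θ(w₁, w) ≤ 6.5·t. Let η be the constructed label function η(x) = 1/2 + sgn(⟨w,x⟩)·℘(|φ(x,w)|) if |φ(x,w₁)| ≤ 6.5·t, and η(x) = 1/2 + sgn(⟨w₁,x⟩)·℘(|φ(x,w₁)|) if |φ(x,w₁)| > 6.5·t. Then η satisfies the Tsybakov noise condition with respect to w: for every nonzero x ∈ ℝ^d, μ₀·|φ(x,w)|^{α/(1−α)} ≤ |η(x) − 1/2|. -/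

import Mathlib

open scoped RealInnerProductSpace

/-- The signed margin angle `φ(x,w) = π/2 − θ(x,w)`. -/
noncomputable def phi {d : ℕ} (x w : EuclideanSpace ℝ (Fin d)) : ℝ :=
  Real.pi / 2 - InnerProductGeometry.angle x w

/-- `℘(ϑ) = min{2^{α/(1−α)}·μ₀·ϑ^{α/(1−α)}, 1/2}`. -/
noncomputable def wp (α μ₀ ϑ : ℝ) : ℝ :=
  min ((2 : ℝ) ^ (α / (1 - α)) * μ₀ * ϑ ^ (α / (1 - α))) (1 / 2)

/-- The constructed label function `η` relative to the reference hypothesis `w₁`. -/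
noncomputable def eta {d : ℕ} (α μ₀ t : ℝ) (w₁ w : EuclideanSpace ℝ (Fin d))
    (x : EuclideanSpace ℝ (Fin d)) : ℝ :=
  if |phi x w₁| ≤ 6.5 * t then 1 / 2 + Real.sign ⟪w, x⟫ * wp α μ₀ |phi x w|
  else 1 / 2 + Real.sign ⟪w₁, x⟫ * wp α μ₀ |phi x w₁|

/-!
Both branches of `η` have `|η(x) − 1/2| = ℘(|φ(x,v)|)` for `v = w` resp. `v = w₁`, unless
`⟨v,x⟩ = 0`, in which case `φ(x,v) = 0`. Since `|φ| ≤ π/2`, the hypothesis on `μ₀` makes the cap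
`1/2` in `℘` harmless. In the first branch `2^{α/(1−α)} ≥ 1` suffices. In the second branch the
triangle inequality for angles gives `|φ(x,w)| ≤ |φ(x,w₁)| + θ(w₁,w) ≤ 2|φ(x,w₁)|`, and the factor
`2^{α/(1−α)}` in `℘` absorbs the `2`; there also `|φ(x,w₁)| > θ(w₁,w) ≥ 0` rules out `⟨w₁,x⟩ = 0`.
-/

open InnerProductGeometry Real

lemma abs_sign_mul_of_ne_zero {s : ℝ} (hs : s ≠ 0) (a : ℝ) : |Real.sign s * a| = |a| := by
  rcases sign_apply_eq_of_ne_zero s hs with h | h <;> simp [h]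

section MarginAngle

variable {d : ℕ}

lemma abs_phi_le_pi_div_two (x w : EuclideanSpace ℝ (Fin d)) : |phi x w| ≤ π / 2 := by
  rw [phi, abs_le]
  constructor <;> linarith [angle_nonneg x w, angle_le_pi x w]

lemma phi_eq_zero_iff {x w : EuclideanSpace ℝ (Fin d)} : phi x w = 0 ↔ ⟪w, x⟫ = 0 := by
  rw [phi, sub_eq_zero, eq_comm, angle_comm, inner_eq_zero_iff_angle_eq_pi_div_two]

lemma abs_phi_sub_phi_le_angle (x v w : EuclideanSpace ℝ (Fin d)) :
    |phi x w - phi x v| ≤ angle v w := by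
  have hxw := angle_le_angle_add_angle x v w
  have hxv := angle_le_angle_add_angle x w v
  rw [angle_comm w v] at hxv
  rw [phi, phi, abs_le]
  constructor <;> linarith

lemma abs_phi_le_two_mul_of_angle_le {x v w : EuclideanSpace ℝ (Fin d)}
    (h : angle v w ≤ |phi x v|) : |phi x w| ≤ 2 * |phi x v| := by
  have := abs_sub_abs_le_abs_sub (phi x w) (phi x v)
  linarith [abs_phi_sub_phi_le_angle x v w]

end MarginAngle

section Wp

variable {α μ₀ ϑ : ℝ}

lemma wp_nonneg (hμ : 0 ≤ μ₀) (hϑ : 0 ≤ ϑ) : 0 ≤ wp α μ₀ ϑ :=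
  le_min (by positivity) (by norm_num)

lemma mul_rpow_le_wp (hα : 0 ≤ α / (1 - α)) (hμ : 0 ≤ μ₀) {ϑ' : ℝ} (hϑ' : 0 ≤ ϑ')
    (hle : ϑ' ≤ 2 * ϑ) (hhalf : μ₀ * ϑ' ^ (α / (1 - α)) ≤ 1 / 2) :
    μ₀ * ϑ' ^ (α / (1 - α)) ≤ wp α μ₀ ϑ := by
  refine le_min ?_ hhalf
  calc μ₀ * ϑ' ^ (α / (1 - α)) ≤ μ₀ * (2 * ϑ) ^ (α / (1 - α)) := by gcongr
    _ = (2 : ℝ) ^ (α / (1 - α)) * μ₀ * ϑ ^ (α / (1 - α)) := by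
      rw [mul_rpow zero_le_two (by linarith)]
      ring

end Wp

theorem stmt_11_general (d : ℕ) (α μ₀ t : ℝ) (hα : 0 < α) (hα' : α < 1) (hμ : 0 < μ₀)
    (hμ' : μ₀ * (Real.pi / 2) ^ (α / (1 - α)) ≤ 1 / 2)
    (w₁ w : EuclideanSpace ℝ (Fin d))
    (hangle : InnerProductGeometry.angle w₁ w ≤ 6.5 * t) :
    ∀ x : EuclideanSpace ℝ (Fin d), x ≠ 0 →
      μ₀ * |phi x w| ^ (α / (1 - α)) ≤ |eta α μ₀ t w₁ w x - 1 / 2| := by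
  intro x _
  have hβ : 0 < α / (1 - α) := div_pos hα (by linarith)
  have hhalf : μ₀ * |phi x w| ^ (α / (1 - α)) ≤ 1 / 2 := by
    refine le_trans ?_ hμ'
    gcongr
    exact abs_phi_le_pi_div_two x w
  rw [eta]
  split_ifs with hnear
  · rcases eq_or_ne ⟪w, x⟫ 0 with h0 | h0
    · rw [phi_eq_zero_iff.mpr h0, abs_zero, zero_rpow hβ.ne', mul_zero]
      exact abs_nonneg _
    · rw [add_sub_cancel_left, abs_sign_mul_of_ne_zero h0,
        abs_of_nonneg (wp_nonneg hμ.le (abs_nonneg _))]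
      exact mul_rpow_le_wp hβ.le hμ.le (abs_nonneg _) (le_mul_of_one_le_left (abs_nonneg _) one_le_two) hhalf
  · have hfar : angle w₁ w < |phi x w₁| := hangle.trans_lt (not_le.mp hnear)
    have h0 : ⟪w₁, x⟫ ≠ 0 := fun h ↦ by
      rw [phi_eq_zero_iff.mpr h, abs_zero] at hfar
      exact (angle_nonneg w₁ w).not_gt hfar
    rw [add_sub_cancel_left, abs_sign_mul_of_ne_zero h0,
      abs_of_nonneg (wp_nonneg hμ.le (abs_nonneg _))]
    exact mul_rpow_le_wp hβ.le hμ.le (abs_nonneg _)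
      (abs_phi_le_two_mul_of_angle_le hfar.le) hhalf

/-- The constructed label function `η` satisfies the Tsybakov noise condition with respect
to `w`: for every nonzero `x`, `μ₀·|φ(x,w)|^{α/(1−α)} ≤ |η(x) − 1/2|`. -/
theorem stmt_11 (d : ℕ) (α μ₀ t : ℝ) (hα : 0 < α) (hα' : α < 1) (hμ : 0 < μ₀)
    (hμ' : μ₀ * (Real.pi / 2) ^ (α / (1 - α)) ≤ 1 / 2) (ht : 0 < t)
    (w₁ w : EuclideanSpace ℝ (Fin d)) (hw₁ : ‖w₁‖ = 1) (hw : ‖w‖ = 1)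
    (hangle : InnerProductGeometry.angle w₁ w ≤ 6.5 * t) :
    ∀ x : EuclideanSpace ℝ (Fin d), x ≠ 0 →
      μ₀ * |phi x w| ^ (α / (1 - α)) ≤ |eta α μ₀ t w₁ w x - 1 / 2| :=
  stmt_11_general d α μ₀ t hα hα' hμ hμ' w₁ w hangle
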